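/- Every bicyclic bitrade in τ-representation is spherical: if [τ₁, τ₂, τ₃] satisfies (T1), (T2), (T3) and some τ_j consists of exactly two cycles, then ⟨τ₁,τ₂,τ₃⟩ is transitive on Γ and z(τ₁) + z(τ₂) + z(τ₃) = |Γ| + 2. -/

import Mathlib

/-- The set of points moved by a permutation. -/
def mov (σ : Equiv.Perm ℕ) : Set ℕ := {x | σ x ≠ x}

/-- The underlying set `Γ = mov(τ₁) ∪ mov(τ₂) ∪ mov(τ₃)` of a triple of permutations. -/
def Gam (τ : Fin 3 → Equiv.Perm ℕ) : Set ℕ := mov (τ 0) ∪ mov (τ 1) ∪ mov (τ 2)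

/-- A bitrade in τ-representation: a triple `[τ₁, τ₂, τ₃]` of permutations of the
finite set `Γ = mov(τ₁) ∪ mov(τ₂) ∪ mov(τ₃)` (all permutations composed left to
right) satisfying (T1) `τ₁τ₂τ₃ = 1`, (T2) any cycle of `τ_i` and any cycle of `τ_j`
(`i < j`) move at most one common point, and (T3) each `τ_i` is fixed-point-free
on `Γ`. -/
structure IsTauRep (τ : Fin 3 → Equiv.Perm ℕ) : Prop where
  fin : (Gam τ).Finite
  t1 : ∀ x, τ 2 (τ 1 (τ 0 x)) = x
  t2 : ∀ i j : Fin 3, i < j → ∀ x y : ℕ, x ≠ y →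
    ¬((τ i).SameCycle x y ∧ (τ j).SameCycle x y)
  t3 : ∀ i : Fin 3, ∀ x ∈ Gam τ, τ i x ≠ x

/-- The same-cycle setoid on the set of points moved by `σ`;
its classes are the (nontrivial) cycles of `σ`. -/
def cycSetoidOn (σ : Equiv.Perm ℕ) : Setoid (mov σ) :=
  ⟨fun a b => σ.SameCycle a.1 b.1,
    ⟨fun a => Equiv.Perm.SameCycle.refl σ a.1,
     fun h => h.symm, fun h h' => h.trans h'⟩⟩

/-- `zc σ` is the number of cycles of `σ`. -/
noncomputable def zc (σ : Equiv.Perm ℕ) : ℕ := Nat.card (Quotient (cycSetoidOn σ))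

/-- (T4): the group `⟨τ₁, τ₂, τ₃⟩` acts transitively on `Γ`. -/
def TransOn (τ : Fin 3 → Equiv.Perm ℕ) : Prop :=
  ∀ x ∈ Gam τ, ∀ y ∈ Gam τ,
    ∃ g ∈ Subgroup.closure ({τ 0, τ 1, τ 2} : Set (Equiv.Perm ℕ)), g x = y

/-- A spherical bitrade in τ-representation: (T4) holds and the genus defined by
Euler's formula `order = size + 2 - 2g` is zero. -/
def Spherical (τ : Fin 3 → Equiv.Perm ℕ) : Prop :=
  IsTauRep τ ∧ TransOn τ ∧
    zc (τ 0) + zc (τ 1) + zc (τ 2) = Nat.card (Gam τ) + 2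

/-- A bitrade in τ-representation is bicyclic if some `τ_j` has exactly two cycles. -/
def Bicyclic (τ : Fin 3 → Equiv.Perm ℕ) : Prop := ∃ j : Fin 3, zc (τ j) = 2

/-- The inverse `Z⁻¹ = [τ₁⁻¹, τ₂⁻¹, τ₂τ₁]` of a bitrade in τ-representation
(`τ₂τ₁`, composed left to right, is `τ 0 * τ 1` in Lean's convention). -/
def ZInv (τ : Fin 3 → Equiv.Perm ℕ) : Fin 3 → Equiv.Perm ℕ :=
  ![(τ 0)⁻¹, (τ 1)⁻¹, τ 0 * τ 1]

/-- `SlideRel τ x j u τ'` says that `τ'` is the result of the slide expansion of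
`τ` at the point `x ∈ Γ` in direction `j`, with new point `u ∉ Γ`.  Writing
`k = j+1`, `l = j+2`, `w = xτ_j`, `a = xτ_j⁻¹`, `b = wτ_j`, `z = xτ_k`,
`y = wτ_l⁻¹`, the preconditions are that the `τ_j`-cycle through `x` has length at
least 3 and that the `τ_k`-cycle through `x` and the `τ_l`-cycle through `w` have
no common point; the new permutations send `a ↦ u ↦ b`, `x ↦ w ↦ x` (direction `j`),
insert `u` after `x` (direction `k`) and insert `u` between `y` and `w`
(direction `l`), agreeing with the old ones elsewhere. -/
def SlideRel (τ : Fin 3 → Equiv.Perm ℕ) (x : ℕ) (j : Fin 3) (u : ℕ)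
    (τ' : Fin 3 → Equiv.Perm ℕ) : Prop :=
  x ∈ Gam τ ∧ u ∉ Gam τ ∧
  τ j x ≠ x ∧ τ j (τ j x) ≠ x ∧
  (∀ p : ℕ, (τ (j + 1)).SameCycle x p → (τ (j + 2)).SameCycle (τ j x) p → False) ∧
  (τ' j ((τ j)⁻¹ x) = u ∧ τ' j u = τ j (τ j x) ∧
    τ' j x = τ j x ∧ τ' j (τ j x) = x ∧
    ∀ p : ℕ, p ≠ (τ j)⁻¹ x → p ≠ u → p ≠ x → p ≠ τ j x → τ' j p = τ j p) ∧
  (τ' (j + 1) x = u ∧ τ' (j + 1) u = τ (j + 1) x ∧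
    ∀ p : ℕ, p ≠ x → p ≠ u → τ' (j + 1) p = τ (j + 1) p) ∧
  (τ' (j + 2) ((τ (j + 2))⁻¹ (τ j x)) = u ∧ τ' (j + 2) u = τ j x ∧
    ∀ p : ℕ, p ≠ (τ (j + 2))⁻¹ (τ j x) → p ≠ u → τ' (j + 2) p = τ (j + 2) p)

/-!
If `τ j` has exactly two cycles, then by (T2) two distinct points of one `τ i`-cycle (`i ≠ j`)
lie on different `τ j`-cycles. A `τ i`-cycle of length at least three would therefore meet three
`τ j`-cycles, so both other `τ i` are fixed-point-free involutions of `Γ` and have `|Γ| / 2`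
cycles each. Likewise every point of `Γ` lies on the `τ j`-cycle of `x` or of `x τ_i`, which
gives transitivity.
-/

lemma mov_subset_Gam (τ : Fin 3 → Equiv.Perm ℕ) (i : Fin 3) : mov (τ i) ⊆ Gam τ := by
  fin_cases i
  · exact fun x hx => Or.inl (Or.inl hx)
  · exact fun x hx => Or.inl (Or.inr hx)
  · exact fun x hx => Or.inr hx

lemma apply_mem_mov {σ : Equiv.Perm ℕ} {x : ℕ} (hx : x ∈ mov σ) : σ x ∈ mov σ :=
  fun h => hx (σ.injective h)

lemma Setoid.card_eq_mul_card_quotient {α : Type*} [Finite α] (s : Setoid α) {k : ℕ}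
    (hk : ∀ a : α, Nat.card {b // s b a} = k) : Nat.card α = k * Nat.card (Quotient s) := by
  have : Fintype (Quotient s) := Fintype.ofFinite _
  calc Nat.card α = Nat.card (Σ q : Quotient s, {b // Quotient.mk s b = q}) :=
        (Nat.card_congr (Equiv.sigmaFiberEquiv _)).symm
    _ = ∑ q : Quotient s, Nat.card {b // Quotient.mk s b = q} := Nat.card_sigma
    _ = ∑ _q : Quotient s, k := Finset.sum_congr rfl fun q _ =>
        q.inductionOn fun a => by simpa only [Quotient.eq] using hk a
    _ = k * Nat.card (Quotient s) := by simp [mul_comm, Nat.card_eq_fintype_card]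

lemma sameCycle_or_sameCycle_of_zc_eq_two {σ : Equiv.Perm ℕ} (hσ : zc σ = 2) {a b c : ℕ}
    (ha : a ∈ mov σ) (hb : b ∈ mov σ) (hc : c ∈ mov σ) (hab : ¬σ.SameCycle a b) :
    σ.SameCycle a c ∨ σ.SameCycle b c := by
  obtain ⟨q, -, hq⟩ :=
    (Nat.card_eq_two_iff' (⟦⟨a, ha⟩⟧ : Quotient (cycSetoidOn σ))).mp hσ
  have hbq : ⟦⟨b, hb⟩⟧ = q := hq _ fun h => hab (Quotient.exact h).symm
  by_contra! hac
  have hcq : ⟦⟨c, hc⟩⟧ = q := hq _ fun h => hac.1 (Quotient.exact h).symm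
  exact hac.2 (Quotient.exact (hbq.trans hcq.symm))

lemma Function.Involutive.sameCycle_iff {α : Type*} {σ : Equiv.Perm α}
    (hσ : Function.Involutive σ) {x y : α} : σ.SameCycle x y ↔ y = x ∨ y = σ x := by
  refine ⟨fun ⟨n, hn⟩ => ?_, ?_⟩
  · have hsq : σ ^ (2 : ℤ) = 1 := Equiv.ext fun x => by simp [sq, hσ x]
    rw [zpow_eq_zpow_emod n hsq] at hn
    rcases Int.emod_two_eq_zero_or_one n with h | h <;> simp_all
  · rintro (rfl | rfl)
    exacts [Equiv.Perm.SameCycle.refl σ y, Equiv.Perm.SameCycle.refl σ x |>.apply_right]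

lemma Function.Involutive.card_mov_eq_two_mul_zc {σ : Equiv.Perm ℕ}
    (hσ : Function.Involutive σ) (hfin : (mov σ).Finite) : Nat.card (mov σ) = 2 * zc σ := by
  have : Finite (mov σ) := hfin.to_subtype
  refine Setoid.card_eq_mul_card_quotient _ fun x => Nat.card_eq_two_iff.mpr ?_
  refine ⟨⟨x, .refl σ x⟩,
    ⟨⟨σ x, apply_mem_mov x.2⟩, (hσ.sameCycle_iff.mpr (.inr rfl)).symm⟩, ?_, ?_⟩
  · intro h
    exact x.2 (congrArg (fun p => p.1.1) h).symm
  · refine Set.eq_univ_of_forall fun ⟨y, hy⟩ => ?_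
    rcases hσ.sameCycle_iff.mp hy.symm with h | h
    · exact .inl (Subtype.ext (Subtype.ext h))
    · exact .inr (Subtype.ext (Subtype.ext h))

namespace IsTauRep

variable {τ : Fin 3 → Equiv.Perm ℕ}

lemma mov_eq_Gam (h : IsTauRep τ) (i : Fin 3) : mov (τ i) = Gam τ :=
  (mov_subset_Gam τ i).antisymm (h.t3 i)

lemma not_sameCycle (h : IsTauRep τ) {i j : Fin 3} (hij : i ≠ j) {x y : ℕ} (hxy : x ≠ y)
    (hi : (τ i).SameCycle x y) : ¬(τ j).SameCycle x y := fun hj =>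
  hij.lt_or_gt.elim (fun hlt => h.t2 i j hlt x y hxy ⟨hi, hj⟩)
    (fun hlt => h.t2 j i hlt x y hxy ⟨hj, hi⟩)

lemma sameCycle_or_sameCycle_apply (h : IsTauRep τ) {i j : Fin 3} (hij : i ≠ j)
    (hj : zc (τ j) = 2) {x y : ℕ} (hx : x ∈ Gam τ) (hy : y ∈ Gam τ) :
    (τ j).SameCycle x y ∨ (τ j).SameCycle (τ i x) y := by
  have hsep : ¬(τ j).SameCycle x (τ i x) :=
    h.not_sameCycle hij (h.t3 i x hx).symm ⟨1, by simp⟩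
  have hix : τ i x ∈ Gam τ := h.mov_eq_Gam i ▸ apply_mem_mov (h.mov_eq_Gam i ▸ hx)
  rw [← h.mov_eq_Gam j] at hx hy hix
  exact sameCycle_or_sameCycle_of_zc_eq_two hj hx hix hy hsep

lemma involutive_of_zc_eq_two (h : IsTauRep τ) {i j : Fin 3} (hij : i ≠ j)
    (hj : zc (τ j) = 2) : Function.Involutive (τ i) := by
  intro x
  by_cases hfix : τ i x = x
  · rw [hfix, hfix]
  by_contra hne
  have hx : x ∈ Gam τ := mov_subset_Gam τ i hfix
  have hx₂ : τ i (τ i x) ∈ Gam τ :=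
    h.mov_eq_Gam i ▸ apply_mem_mov (apply_mem_mov (h.mov_eq_Gam i ▸ hx))
  have hx₁₂ : τ i x ≠ τ i (τ i x) := fun h' => hfix ((τ i).injective h').symm
  rcases h.sameCycle_or_sameCycle_apply hij hj hx hx₂ with hs | hs
  · exact h.not_sameCycle hij (Ne.symm hne) ⟨2, by simp [sq]⟩ hs
  · exact h.not_sameCycle hij hx₁₂ ⟨1, by simp⟩ hs

lemma transOn_of_zc_eq_two (h : IsTauRep τ) {j : Fin 3} (hj : zc (τ j) = 2) : TransOn τ := by
  have mem : ∀ i, τ i ∈ Subgroup.closure ({τ 0, τ 1, τ 2} : Set (Equiv.Perm ℕ)) :=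
    fun i => Subgroup.subset_closure (by fin_cases i <;> simp)
  intro x hx y hy
  rcases h.sameCycle_or_sameCycle_apply ((by decide : ∀ k : Fin 3, k + 1 ≠ k) j) hj hx hy with
    ⟨n, hn⟩ | ⟨n, hn⟩
  · exact ⟨τ j ^ n, zpow_mem (mem j) n, hn⟩
  · exact ⟨τ j ^ n * τ (j + 1), mul_mem (zpow_mem (mem j) n) (mem _), hn⟩

lemma card_Gam_eq_two_mul_zc (h : IsTauRep τ) {i j : Fin 3} (hij : i ≠ j)
    (hj : zc (τ j) = 2) : Nat.card (Gam τ) = 2 * zc (τ i) := by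
  rw [← h.mov_eq_Gam i]
  exact (h.involutive_of_zc_eq_two hij hj).card_mov_eq_two_mul_zc ((h.mov_eq_Gam i).symm ▸ h.fin)

end IsTauRep

/-- Every bicyclic bitrade in τ-representation is spherical:
if `[τ₁, τ₂, τ₃]` satisfies (T1), (T2), (T3) and some `τ_j` has exactly two cycles,
then `⟨τ₁, τ₂, τ₃⟩` is transitive on `Γ` and
`z(τ₁) + z(τ₂) + z(τ₃) = |Γ| + 2`. -/
theorem bicyclic_is_spherical (τ : Fin 3 → Equiv.Perm ℕ)
    (h : IsTauRep τ) (hb : Bicyclic τ) :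
    TransOn τ ∧ zc (τ 0) + zc (τ 1) + zc (τ 2) = Nat.card (Gam τ) + 2 := by
  obtain ⟨j, hj⟩ := hb
  refine ⟨h.transOn_of_zc_eq_two hj, ?_⟩
  have hcard : ∀ i, i ≠ j → Nat.card (Gam τ) = 2 * zc (τ i) := fun i hij =>
    h.card_Gam_eq_two_mul_zc hij hj
  obtain rfl | rfl | rfl : j = 0 ∨ j = 1 ∨ j = 2 := by omega
  · linarith [hcard 1 (by decide), hcard 2 (by decide)]
  · linarith [hcard 0 (by decide), hcard 2 (by decide)]
  · linarith [hcard 0 (by decide), hcard 1 (by decide)]
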